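/- For every R-module M, the sequence 0 → M → (R_f ⊗_R M) ⊕ (R̂ ⊗_R M) → R̂_f ⊗_R M → 0 is exact, where the first map sends m to (1 ⊗ m, 1 ⊗ m) and the second map sends (a ⊗ m, b ⊗ m') to the difference of their images in R̂_f ⊗_R M under the canonical base-change maps. -/

import Mathlib

/-!
For `M = R` this is a gluing statement of Beauville–Laszlo type. Since `f` is a nonzerodivisor on
the flat `R`-module `R̂` and `R/fⁿR ≅ R̂/fⁿR̂`, an element of `R_f` and an element of `R̂` with the
same image in `R̂_f` come from a single element of `R`, and every element of `R̂_f` is the sum of an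
image from `R_f` and an image from `R̂`. Tensoring this short exact sequence with `M` keeps it
exact on the right by right exactness of `⊗`, and on the left because `R̂_f` is flat over `R`.
-/

open TensorProduct

set_option maxHeartbeats 1000000
set_option synthInstance.maxHeartbeats 400000

noncomputable section

variable (R : Type*) [CommRing R] (f : R)

/-- The `(f)`-adic completion `R̂` of `R`. -/
abbrev Rhat : Type _ := AdicCompletion (Ideal.span {f}) R

/-- The localization `R_f = R[f⁻¹]`. -/
abbrev Rf : Type _ := Localization.Away f

/-- The localization `R̂_f = R̂[ι(f)⁻¹]`. -/
abbrev Rhatf : Type _ := Localization.Away (algebraMap R (Rhat R f) f)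

/-- The canonical map `R_f → R̂_f` extending `ι : R → R̂` (as an `R`-algebra map). -/
noncomputable def psiAlg : Rf R f →ₐ[R] Rhatf R f :=
  Localization.awayMapₐ (Algebra.ofId R (Rhat R f)) f

/-- The canonical map `R̂ → R̂_f` as an `R`-linear map. -/
noncomputable def thetaLin : Rhat R f →ₗ[R] Rhatf R f :=
  (IsScalarTower.toAlgHom R (Rhat R f) (Rhatf R f)).toLinearMap

/-- The canonical map `R_f → R̂_f` as an `R`-linear map. -/
noncomputable def psiLin : Rf R f →ₗ[R] Rhatf R f :=
  (psiAlg R f).toLinearMap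

variable {R f}

namespace LinearMap

variable {A B B₁ B₂ C : Type*} [AddCommGroup A] [AddCommGroup B] [AddCommGroup B₁]
  [AddCommGroup B₂] [AddCommGroup C] [Module R A] [Module R B] [Module R B₁] [Module R B₂]
  [Module R C] (M : Type*) [AddCommGroup M] [Module R M]

theorem rTensor_injective_of_exact_of_flat [Module.Flat R C] {i : A →ₗ[R] B} {p : B →ₗ[R] C}
    (hi : Function.Injective i) (hip : Function.Exact i p) (hp : Function.Surjective p) :
    Function.Injective (i.rTensor M) := by
  have := lTensor_injective_of_exact_of_flat p hp i hi hip M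
  rw [← comm_comp_rTensor_comp_comm_eq] at this
  simpa using this

theorem prodLeft_comp_rTensor_prod (u₁ : A →ₗ[R] B₁) (u₂ : A →ₗ[R] B₂) :
    (prodLeft R R B₁ B₂ M).toLinearMap ∘ₗ (u₁.prod u₂).rTensor M =
      (u₁.rTensor M).prod (u₂.rTensor M) :=
  TensorProduct.ext' fun _ _ ↦ by simp

theorem coprod_rTensor_comp_prodLeft (v₁ : B₁ →ₗ[R] C) (v₂ : B₂ →ₗ[R] C) :
    (v₁.rTensor M).coprod (v₂.rTensor M) ∘ₗ (prodLeft R R B₁ B₂ M).toLinearMap =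
      (v₁.coprod v₂).rTensor M :=
  TensorProduct.ext' fun ⟨_, _⟩ _ ↦ by simp [add_tmul]

variable {M} in
theorem rTensor_prod_coprod_shortExact [Module.Flat R C] {u₁ : A →ₗ[R] B₁} {u₂ : A →ₗ[R] B₂}
    {v₁ : B₁ →ₗ[R] C} {v₂ : B₂ →ₗ[R] C} (hu : Function.Injective (u₁.prod u₂))
    (huv : Function.Exact (u₁.prod u₂) (v₁.coprod v₂)) (hv : Function.Surjective (v₁.coprod v₂)) :
    Function.Injective ((u₁.rTensor M).prod (u₂.rTensor M)) ∧
      Function.Exact ((u₁.rTensor M).prod (u₂.rTensor M)) ((v₁.rTensor M).coprod (v₂.rTensor M)) ∧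
      Function.Surjective ((v₁.rTensor M).coprod (v₂.rTensor M)) := by
  let e := prodLeft R R B₁ B₂ M
  rw [← prodLeft_comp_rTensor_prod]
  refine ⟨e.injective.comp (rTensor_injective_of_exact_of_flat M hu huv hv), ?_, ?_⟩
  · refine Function.Exact.of_ladder_linearEquiv_of_exact (e₁ := .refl R _) (e₂ := e)
      (e₃ := .refl R _) rfl ?_ (rTensor_exact M huv hv)
    rw [← coprod_rTensor_comp_prodLeft]; rfl
  · have hcoprod : (v₁.rTensor M).coprod (v₂.rTensor M) = (v₁.coprod v₂).rTensor M ∘ₗ e.symm := by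
      simp [e, ← coprod_rTensor_comp_prodLeft, comp_assoc]
    rw [hcoprod]
    exact (rTensor_surjective M hv).comp e.symm.surjective

end LinearMap

namespace AdicCompletion

variable {M : Type*} [AddCommGroup M] [Module R M]

theorem _root_.Submodule.mem_span_singleton_pow_smul_top {n : ℕ} {x : M} :
    x ∈ (Ideal.span {f} ^ n • ⊤ : Submodule R M) ↔ ∃ y, f ^ n • y = x := by
  rw [Ideal.span_singleton_pow, Submodule.ideal_span_singleton_smul,
    Submodule.mem_smul_pointwise_iff_exists]
  simp

theorem eval_span_singleton_eq_zero_iff {n : ℕ} {x : AdicCompletion (Ideal.span {f}) M} :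
    eval (Ideal.span {f}) M n x = 0 ↔ ∃ y, f ^ n • y = x := by
  rw [← LinearMap.mem_ker, ← pow_smul_top_eq_ker_eval (Submodule.fg_span_singleton f),
    Submodule.mem_span_singleton_pow_smul_top]

theorem exists_of_add_pow_smul (n : ℕ) (x : AdicCompletion (Ideal.span {f}) M) :
    ∃ m c, of (Ideal.span {f}) M m + f ^ n • c = x := by
  obtain ⟨m, hm⟩ := Submodule.mkQ_surjective _ (eval (Ideal.span {f}) M n x)
  obtain ⟨c, hc⟩ := eval_span_singleton_eq_zero_iff.mp
    (show eval (Ideal.span {f}) M n (x - of _ M m) = 0 by rw [map_sub, eval_of, hm, sub_self])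
  exact ⟨m, c, by rw [hc, add_sub_cancel]⟩

theorem exists_pow_smul_eq_of_iff {n : ℕ} {m : M} :
    (∃ c, f ^ n • c = of (Ideal.span {f}) M m) ↔ ∃ y, f ^ n • y = m := by
  rw [← eval_span_singleton_eq_zero_iff, eval_of, Submodule.mkQ_apply,
    Submodule.Quotient.mk_eq_zero, Submodule.mem_span_singleton_pow_smul_top]

end AdicCompletion

theorem psiAlg_algebraMap (r : R) :
    psiAlg R f (algebraMap R (Rf R f) r) =
      algebraMap (Rhat R f) (Rhatf R f) (algebraMap R (Rhat R f) r) := by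
  rw [AlgHom.commutes, IsScalarTower.algebraMap_apply R (Rhat R f)]

theorem algebraMap_mem_nonZeroDivisors_rhat [IsNoetherianRing R] (hf : f ∈ nonZeroDivisors R) :
    algebraMap R (Rhat R f) f ∈ nonZeroDivisors (Rhat R f) :=
  mem_nonZeroDivisors_iff_right.mpr fun b hb ↦
    (Module.Flat.isSMulRegular_of_nonZeroDivisors hf).right_eq_zero_of_smul
      (by rwa [Algebra.smul_def, mul_comm])

theorem algebraMap_rhat_rhatf_injective [IsNoetherianRing R] (hf : f ∈ nonZeroDivisors R) :
    Function.Injective (algebraMap (Rhat R f) (Rhatf R f)) :=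
  IsLocalization.injective _ (Submonoid.powers_le.mpr (algebraMap_mem_nonZeroDivisors_rhat hf))

theorem exists_algebraMap_eq_of_psiAlg_eq [IsNoetherianRing R] (hf : f ∈ nonZeroDivisors R)
    {a : Rf R f} {b : Rhat R f}
    (hab : psiAlg R f a = algebraMap (Rhat R f) (Rhatf R f) b) :
    ∃ r, algebraMap R (Rf R f) r = a ∧ algebraMap R (Rhat R f) r = b := by
  obtain ⟨n, x, hx⟩ := IsLocalization.Away.surj f a
  have hb : f ^ n • b = algebraMap R (Rhat R f) x := by
    apply algebraMap_rhat_rhatf_injective hf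
    rw [← psiAlg_algebraMap, ← hx, Algebra.smul_def]
    simp only [map_mul, map_pow, psiAlg_algebraMap, hab, mul_comm]
  obtain ⟨r, rfl⟩ := AdicCompletion.exists_pow_smul_eq_of_iff.mp ⟨b, hb⟩
  refine ⟨r, ?_, ?_⟩
  · apply (IsLocalization.Away.algebraMap_isUnit f).pow n |>.mul_left_injective
    simp only [hx, map_mul, map_pow, smul_eq_mul, mul_comm]
  · apply (Module.Flat.isSMulRegular_of_nonZeroDivisors (M := Rhat R f) (pow_mem hf n))
    simp only [hb, Algebra.smul_def, map_mul, map_pow, Algebra.algebraMap_self, RingHom.id_apply]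

theorem exists_psiAlg_add_algebraMap_eq (y : Rhatf R f) :
    ∃ a b, psiAlg R f a + algebraMap (Rhat R f) (Rhatf R f) b = y := by
  obtain ⟨n, b, hb⟩ := IsLocalization.Away.surj (algebraMap R (Rhat R f) f) y
  obtain ⟨x, c, rfl⟩ := AdicCompletion.exists_of_add_pow_smul n b
  let s : Submonoid.powers f := ⟨f ^ n, n, rfl⟩
  refine ⟨IsLocalization.mk' (Rf R f) x s, c, ?_⟩
  refine ((IsLocalization.Away.algebraMap_isUnit
    (algebraMap R (Rhat R f) f)).pow n).mul_right_cancel ?_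
  have hs : algebraMap (Rhat R f) (Rhatf R f) (algebraMap R (Rhat R f) f) ^ n =
      psiAlg R f (algebraMap R (Rf R f) s) := by
    rw [psiAlg_algebraMap, map_pow, map_pow]
  rw [add_mul, hs, ← map_mul, IsLocalization.mk'_spec, psiAlg_algebraMap, ← hs, hb, map_add,
    Algebra.smul_def, map_mul, mul_comm]
  simp only [map_pow, AdicCompletion.algebraMap_apply, Algebra.algebraMap_self, RingHom.id_apply]

theorem algebraLinearMap_prod_injective (hf : f ∈ nonZeroDivisors R) :
    Function.Injective ((Algebra.linearMap R (Rf R f)).prod (Algebra.linearMap R (Rhat R f))) :=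
  fun _ _ h ↦ IsLocalization.injective (Rf R f) (Submonoid.powers_le.mpr hf) (congr_arg Prod.fst h)

theorem exact_algebraLinearMap_prod_psiLin_coprod [IsNoetherianRing R]
    (hf : f ∈ nonZeroDivisors R) :
    Function.Exact ((Algebra.linearMap R (Rf R f)).prod (Algebra.linearMap R (Rhat R f)))
      ((psiLin R f).coprod (-thetaLin R f)) := by
  rintro ⟨a, b⟩
  change psiAlg R f a + -algebraMap (Rhat R f) (Rhatf R f) b = 0 ↔
    ∃ r, (algebraMap R (Rf R f) r, algebraMap R (Rhat R f) r) = (a, b)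
  simp only [← sub_eq_add_neg, sub_eq_zero, Prod.mk.injEq]
  exact ⟨exists_algebraMap_eq_of_psiAlg_eq hf, fun ⟨r, ha, hb⟩ ↦ ha ▸ hb ▸ psiAlg_algebraMap r⟩

theorem psiLin_coprod_neg_thetaLin_surjective :
    Function.Surjective ((psiLin R f).coprod (-thetaLin R f)) := fun y ↦
  let ⟨a, b, h⟩ := exists_psiAlg_add_algebraMap_eq y
  ⟨(a, -b), by simpa [psiLin, thetaLin] using h⟩

variable (R f)

theorem stmt5 [IsNoetherianRing R] (hf : f ∈ nonZeroDivisors R)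
    (M : Type*) [AddCommGroup M] [Module R M] :
    Function.Injective
      (fun m : M => (((1 : Rf R f) ⊗ₜ[R] m : Rf R f ⊗[R] M),
        ((1 : Rhat R f) ⊗ₜ[R] m : Rhat R f ⊗[R] M))) ∧
    (∀ p : (Rf R f ⊗[R] M) × (Rhat R f ⊗[R] M),
      LinearMap.rTensor M (psiLin R f) p.1 - LinearMap.rTensor M (thetaLin R f) p.2 = 0 ↔
        ∃ m : M, p = ((1 : Rf R f) ⊗ₜ[R] m, (1 : Rhat R f) ⊗ₜ[R] m)) ∧
    Function.Surjective
      (fun p : (Rf R f ⊗[R] M) × (Rhat R f ⊗[R] M) =>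
        LinearMap.rTensor M (psiLin R f) p.1 - LinearMap.rTensor M (thetaLin R f) p.2) := by
  have : Module.Flat R (Rhatf R f) := Module.Flat.trans R (Rhat R f) (Rhatf R f)
  obtain ⟨hinj, hexact, hsurj⟩ := LinearMap.rTensor_prod_coprod_shortExact (M := M)
    (algebraLinearMap_prod_injective hf) (exact_algebraLinearMap_prod_psiLin_coprod hf)
    psiLin_coprod_neg_thetaLin_surjective
  rw [LinearMap.rTensor_neg] at hexact hsurj
  refine ⟨fun m m' h ↦ ?_, fun p ↦ ?_, fun y ↦ ?_⟩
  · exact (TensorProduct.lid R M).symm.injective (hinj (by simpa using h))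
  · rw [sub_eq_add_neg, ← LinearMap.neg_apply, ← LinearMap.coprod_apply, hexact p,
      Set.mem_range, (TensorProduct.lid R M).symm.surjective.exists]
    simp [eq_comm]
  · obtain ⟨p, hp⟩ := hsurj y
    exact ⟨p, by simpa [sub_eq_add_neg] using hp⟩
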